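/- Let n ≥ 2 and let A be a normal n×n complex matrix with eigenvalues z_1,…,z_n and an orthonormal basis e_1,…,e_n of ℂⁿ with A·e_j = z_j·e_j; let u_1,…,u_n denote the standard basis of ℂⁿ. Then for every 1 ≤ i ≤ n and every z ∈ ℂ \ {z_1,…,z_n}: det(A_{[i]} − z·I_{n−1}) / det(A − z·I_n) = Σ_{j=1}^n |⟨u_i, e_j⟩|² / (z_j − z). In particular, every eigenvalue of A_{[i]} lies in the convex hull of {z_1,…,z_n}. -/

import Mathlib

/-- The embedding `Fin (n-1) → Fin n` skipping the index `i`. -/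
def skipIdx {n : ℕ} (i : Fin n) (j : Fin (n - 1)) : Fin n :=
  if (j : ℕ) < (i : ℕ) then ⟨(j : ℕ), by have := i.isLt; have := j.isLt; omega⟩
  else ⟨(j : ℕ) + 1, by have := j.isLt; omega⟩

/-- The degeneracy one principal submatrix `A_{[i]}` obtained by deleting the `i`-th row
and `i`-th column of `A`. -/
def subDel {n : ℕ} (A : Matrix (Fin n) (Fin n) ℂ) (i : Fin n) :
    Matrix (Fin (n - 1)) (Fin (n - 1)) ℂ :=
  Matrix.of fun j k => A (skipIdx i j) (skipIdx i k)

/-! The vectors `e_j` are the columns of a unitary `U` with `A = U diag(z) Uᴴ`, so off the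
spectrum `(A - ζ)⁻¹ = U diag((z_j - ζ)⁻¹) Uᴴ`. The minor `det(A_{[i]} - ζ)` is the `(i, i)`
cofactor of `A - ζ`, i.e. the `(i, i)` entry of `adj(A - ζ) = det(A - ζ) (A - ζ)⁻¹`, which is
the formula. At an eigenvalue `μ ∉ {z_j}` of `A_{[i]}` the sum `∑ |U_ij|² / (z_j - μ)` vanishes;
conjugating it writes `μ` as a convex combination of the `z_j` with weights proportional to
`|U_ij|² / |z_j - μ|²`, which do not all vanish since the rows of `U` are unit vectors. -/

open Matrix

lemma skipIdx_eq_succAbove {m : ℕ} (i : Fin (m + 1)) (j : Fin (m + 1 - 1)) :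
    skipIdx i j = i.succAbove j := by
  simp only [skipIdx, Fin.succAbove, Fin.lt_def, Fin.val_castSucc]
  split <;> rfl

lemma subDel_eq_submatrix {m : ℕ} (A : Matrix (Fin (m + 1)) (Fin (m + 1)) ℂ)
    (i : Fin (m + 1)) :
    subDel A i = A.submatrix i.succAbove i.succAbove := by
  ext j k
  simp [subDel, skipIdx_eq_succAbove]

lemma det_subDel_sub_smul_one {m : ℕ} (A : Matrix (Fin (m + 1)) (Fin (m + 1)) ℂ)
    (i : Fin (m + 1)) (ζ : ℂ) :
    (subDel A i - ζ • (1 : Matrix (Fin (m + 1 - 1)) (Fin (m + 1 - 1)) ℂ)).det =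
      (A - ζ • 1).adjugate i i := by
  rw [adjugate_fin_succ_eq_det_submatrix, Even.neg_one_pow ⟨i, rfl⟩, one_mul,
    subDel_eq_submatrix, ← submatrix_one _ Fin.succAbove_right_injective]
  rfl

namespace Matrix

variable {ι 𝕜 : Type*} [Fintype ι] [DecidableEq ι]

lemma adjugate_eq_det_smul_of_mul_eq_one {R : Type*} [CommRing R] {M N : Matrix ι ι R}
    (h : M * N = 1) : M.adjugate = M.det • N := by
  rw [← mul_one M.adjugate, ← h, ← Matrix.mul_assoc, adjugate_mul, smul_mul, Matrix.one_mul]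

variable [RCLike 𝕜]

lemma mul_diagonal_mul_conjTranspose_apply_self (U : Matrix ι ι 𝕜) (d : ι → 𝕜) (i : ι) :
    (U * diagonal d * Uᴴ) i i = ∑ j, d j * (‖U i j‖ : 𝕜) ^ 2 := by
  rw [mul_apply]
  simp only [mul_diagonal, conjTranspose_apply, RCLike.star_def, ← RCLike.mul_conj]
  exact Finset.sum_congr rfl fun j _ => by ring

lemma sum_norm_sq_of_mem_unitaryGroup {U : Matrix ι ι 𝕜} (hU : U ∈ unitaryGroup ι 𝕜) (i : ι) :
    ∑ j, ‖U i j‖ ^ 2 = 1 := by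
  have h := mul_diagonal_mul_conjTranspose_apply_self U (fun _ => 1) i
  rw [diagonal_one, Matrix.mul_one, ← star_eq_conjTranspose, mem_unitaryGroup_iff.mp hU,
    one_apply_eq] at h
  exact_mod_cast (by simpa using h.symm : ∑ j, (‖U i j‖ : 𝕜) ^ 2 = 1)

lemma sub_smul_one_eq_mul_diagonal_mul_conjTranspose {U A : Matrix ι ι 𝕜}
    (hU : U ∈ unitaryGroup ι 𝕜) {z : ι → 𝕜} (hAU : A * U = U * diagonal z) (ζ : 𝕜) :
    A - ζ • 1 = U * diagonal (fun j => z j - ζ) * Uᴴ := by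
  have hUU : U * Uᴴ = 1 := mem_unitaryGroup_iff.mp hU
  rw [show diagonal (fun j => z j - ζ) = diagonal z - ζ • 1 by
      rw [smul_one_eq_diagonal, diagonal_sub],
    Matrix.mul_sub, Matrix.sub_mul, ← hAU, Matrix.mul_smul, Matrix.mul_one, Matrix.smul_mul,
    Matrix.mul_assoc, hUU, Matrix.mul_one]

lemma mul_diagonal_mul_conjTranspose_mul_diagonal_inv_eq_one {U : Matrix ι ι 𝕜}
    (hU : U ∈ unitaryGroup ι 𝕜) {d : ι → 𝕜} (hd : ∀ j, d j ≠ 0) :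
    (U * diagonal d * Uᴴ) * (U * diagonal d⁻¹ * Uᴴ) = 1 := by
  have hdd : diagonal d * diagonal d⁻¹ = 1 := by
    rw [diagonal_mul_diagonal, ← diagonal_one]
    exact congrArg diagonal (funext fun j => mul_inv_cancel₀ (hd j))
  calc (U * diagonal d * Uᴴ) * (U * diagonal d⁻¹ * Uᴴ)
      = U * (diagonal d * (Uᴴ * U) * diagonal d⁻¹) * Uᴴ := by simp only [Matrix.mul_assoc]
    _ = 1 := by
      rw [← star_eq_conjTranspose, mem_unitaryGroup_iff'.mp hU, Matrix.mul_one, hdd,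
        Matrix.mul_one, mem_unitaryGroup_iff.mp hU]

lemma det_mul_diagonal_mul_conjTranspose_ne_zero {U : Matrix ι ι 𝕜}
    (hU : U ∈ unitaryGroup ι 𝕜) {d : ι → 𝕜} (hd : ∀ j, d j ≠ 0) :
    (U * diagonal d * Uᴴ).det ≠ 0 :=
  (isUnit_det_of_right_inverse
    (mul_diagonal_mul_conjTranspose_mul_diagonal_inv_eq_one hU hd)).ne_zero

lemma adjugate_mul_diagonal_mul_conjTranspose_apply_self {U : Matrix ι ι 𝕜}
    (hU : U ∈ unitaryGroup ι 𝕜) {d : ι → 𝕜} (hd : ∀ j, d j ≠ 0) (i : ι) :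
    (U * diagonal d * Uᴴ).adjugate i i =
      (U * diagonal d * Uᴴ).det * ∑ j, (‖U i j‖ : 𝕜) ^ 2 / d j := by
  rw [adjugate_eq_det_smul_of_mul_eq_one
      (mul_diagonal_mul_conjTranspose_mul_diagonal_inv_eq_one hU hd),
    smul_apply, smul_eq_mul, mul_diagonal_mul_conjTranspose_apply_self]
  simp only [Pi.inv_apply, inv_mul_eq_div]

end Matrix

lemma mem_convexHull_of_sum_div_sub_eq_zero {ι : Type*} [Fintype ι] {z : ι → ℂ} {w : ι → ℝ}
    (hw : ∀ j, 0 ≤ w j) (hw_pos : 0 < ∑ j, w j) {μ : ℂ} (hμ : ∀ j, z j ≠ μ)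
    (h : ∑ j, (w j : ℂ) / (z j - μ) = 0) : μ ∈ convexHull ℝ (Set.range z) := by
  set v : ι → ℝ := fun j => w j / Complex.normSq (z j - μ)
  have hz : ∀ j, 0 < Complex.normSq (z j - μ) :=
    fun j => Complex.normSq_pos.mpr (sub_ne_zero.mpr (hμ j))
  have hv : ∀ j, 0 ≤ v j := fun j => div_nonneg (hw j) (hz j).le
  have hv_pos : 0 < ∑ j, v j := by
    obtain ⟨j, -, hj⟩ :=
      Finset.exists_lt_of_sum_lt (by simpa using hw_pos : ∑ j : ι, (0 : ℝ) < ∑ j, w j)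
    exact Finset.sum_pos' (fun j _ => hv j) ⟨j, Finset.mem_univ j, div_pos hj (hz j)⟩
  -- Conjugation turns `1 / (z j - μ)` into the positive multiple `(z j - μ) / |z j - μ|²`.
  have hv_sum : ∑ j, v j • (z j - μ) = 0 := by
    rw [← map_zero (starRingEnd ℂ), ← h, map_sum]
    refine Finset.sum_congr rfl fun j _ => ?_
    rw [div_eq_mul_inv, map_mul, Complex.conj_ofReal, Complex.inv_def, map_mul,
      Complex.conj_conj, Complex.conj_ofReal, Complex.real_smul]
    simp only [v]
    push_cast
    ring
  have hcenter : Finset.univ.centerMass v z = μ := by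
    rw [Finset.centerMass, inv_smul_eq_iff₀ hv_pos.ne', Finset.sum_smul, ← sub_eq_zero,
      ← Finset.sum_sub_distrib]
    simpa only [smul_sub] using hv_sum
  exact hcenter ▸ Finset.univ.centerMass_mem_convexHull (fun j _ => hv j) hv_pos
    (fun j _ => Set.mem_range_self j)
theorem gauss_lucas_normal_matrices_general (n : ℕ)
    (A : Matrix (Fin n) (Fin n) ℂ)
    (z : Fin n → ℂ) (e : Fin n → (Fin n → ℂ))
    (heig : ∀ j, A.mulVec (e j) = z j • e j)
    (hON : ∀ j k, (∑ l, (starRingEnd ℂ) (e j l) * e k l) = if j = k then 1 else 0) :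
    ∀ i : Fin n,
      (∀ ζ : ℂ, ζ ∉ Set.range z →
        (subDel A i - ζ • (1 : Matrix (Fin (n - 1)) (Fin (n - 1)) ℂ)).det /
            (A - ζ • (1 : Matrix (Fin n) (Fin n) ℂ)).det
          = ∑ j, ((‖∑ l, (starRingEnd ℂ) ((Pi.single i (1 : ℂ) : Fin n → ℂ) l) * e j l‖ : ℝ) ^ 2 : ℂ)
              / (z j - ζ)) ∧
      ∀ μ : ℂ, (subDel A i - μ • (1 : Matrix (Fin (n - 1)) (Fin (n - 1)) ℂ)).det = 0 →
        μ ∈ convexHull ℝ (Set.range z) := by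
  intro i
  obtain ⟨m, rfl⟩ := Nat.exists_eq_add_one_of_ne_zero i.pos.ne'
  set U : Matrix (Fin (m + 1)) (Fin (m + 1)) ℂ := of fun k j => e j k
  have hU : U ∈ unitaryGroup (Fin (m + 1)) ℂ := by
    rw [mem_unitaryGroup_iff']
    ext j k
    simpa [U, mul_apply, one_apply] using hON j k
  have hAU : A * U = U * diagonal z := by
    ext k j
    rw [mul_diagonal]
    simpa [U, mul_apply, mulVec, dotProduct, mul_comm] using congrFun (heig j) k
  have hcoord :
      ∀ j, ∑ l, (starRingEnd ℂ) ((Pi.single i 1 : Fin (m + 1) → ℂ) l) * e j l = U i j := by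
    simp [U, Pi.single_apply]
  have hresolvent : ∀ ζ ∉ Set.range z,
      (A - ζ • 1).det ≠ 0 ∧ (subDel A i - ζ • 1).det =
        (A - ζ • 1).det * ∑ j, (‖U i j‖ : ℂ) ^ 2 / (z j - ζ) := by
    intro ζ hζ
    have hd : ∀ j, z j - ζ ≠ 0 := fun j h => hζ ⟨j, sub_eq_zero.mp h⟩
    rw [det_subDel_sub_smul_one, sub_smul_one_eq_mul_diagonal_mul_conjTranspose hU hAU]
    exact ⟨det_mul_diagonal_mul_conjTranspose_ne_zero hU hd,
      adjugate_mul_diagonal_mul_conjTranspose_apply_self hU hd i⟩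
  refine ⟨fun ζ hζ => ?_, fun μ hμ => ?_⟩
  · obtain ⟨hdet, hminor⟩ := hresolvent ζ hζ
    rw [hminor, mul_div_cancel_left₀ _ hdet]
    simp only [hcoord]
  · by_cases hμz : μ ∈ Set.range z
    · exact subset_convexHull ℝ _ hμz
    obtain ⟨hdet, hminor⟩ := hresolvent μ hμz
    refine mem_convexHull_of_sum_div_sub_eq_zero (w := fun j => ‖U i j‖ ^ 2)
      (fun j => by positivity) (by rw [sum_norm_sq_of_mem_unitaryGroup hU]; exact one_pos)
      (fun j h => hμz ⟨j, h⟩) ?_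
    push_cast
    exact (mul_eq_zero.mp (hminor ▸ hμ)).resolve_left hdet

/-- Gauss–Lucas-type theorem for normal matrices: if `A` is normal with orthonormal
eigenbasis `e_1, …, e_n` and eigenvalues `z_1, …, z_n`, then for every `i` and every
`z ∉ {z_1, …, z_n}`,
`det(A_{[i]} - z I_{n-1}) / det(A - z I_n) = ∑_j |⟨u_i, e_j⟩|² / (z_j - z)`;
in particular every eigenvalue of `A_{[i]}` lies in the convex hull of `{z_1, …, z_n}`. -/
theorem gauss_lucas_normal_matrices (n : ℕ) (hn : 2 ≤ n)
    (A : Matrix (Fin n) (Fin n) ℂ)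
    (hA : A * A.conjTranspose = A.conjTranspose * A)
    (z : Fin n → ℂ) (e : Fin n → (Fin n → ℂ))
    (heig : ∀ j, A.mulVec (e j) = z j • e j)
    (hON : ∀ j k, (∑ l, (starRingEnd ℂ) (e j l) * e k l) = if j = k then 1 else 0) :
    ∀ i : Fin n,
      (∀ ζ : ℂ, ζ ∉ Set.range z →
        (subDel A i - ζ • (1 : Matrix (Fin (n - 1)) (Fin (n - 1)) ℂ)).det /
            (A - ζ • (1 : Matrix (Fin n) (Fin n) ℂ)).det
          = ∑ j, ((‖∑ l, (starRingEnd ℂ) ((Pi.single i (1 : ℂ) : Fin n → ℂ) l) * e j l‖ : ℝ) ^ 2 : ℂ)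
              / (z j - ζ)) ∧
      ∀ μ : ℂ, (subDel A i - μ • (1 : Matrix (Fin (n - 1)) (Fin (n - 1)) ℂ)).det = 0 →
        μ ∈ convexHull ℝ (Set.range z) :=
  gauss_lucas_normal_matrices_general n A z e heig hON
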